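/- Let S be compact on L²([0,1]) with ‖S‖ < 1, g⁰(t) = 1_{[0,t]}, and g(t) = (I+S)g⁰(t). Then for distinct pairs (t_{k-1}, t_k) and (t_{l-1}, t_l) with t_k - t_{k-1} → 0, the normalized inner product ⟨(I+S)Δg⁰(t_{k-1}), (I+S)Δg⁰(t_{l-1})⟩ / (‖(I+S)Δg⁰(t_{k-1})‖ · ‖(I+S)Δg⁰(t_{l-1})‖) → 0. -/

import Mathlib

open MeasureTheory Set Filter
open scoped Topology

/-- Lebesgue measure on `[0,1]`. -/
noncomputable def μ01 : Measure ℝ := volume.restrict (Icc 0 1)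

/-- The increment `1_{(a,b]}` of `g⁰(t) = 1_{[0,t]}` as an element of `L²([0,1])`. -/
noncomputable def incr (a b : ℝ) : Lp ℝ 2 μ01 :=
  indicatorConstLp 2 (measurableSet_Ioc (a := a) (b := b))
    ((Measure.restrict_apply_le _ _).trans_lt measure_Ioc_lt_top).ne (1 : ℝ)

/-! The normalized increments `uₙ, vₙ` are orthogonal unit vectors, and `uₙ ⇀ 0` weakly because
`|⟪uₙ, f⟫| ≤ ‖1_{(aₙ,bₙ]} f‖₂ → 0` by absolute continuity of `∫ f²`. A compact `S` upgrades this to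
`‖S uₙ‖ → 0` and `⟪uₙ, S vₙ⟫ → 0` (the `S vₙ` stay in a compact set), so the numerator
`⟪uₙ, S vₙ⟫ + ⟪S uₙ, (I+S) vₙ⟫` tends to `0`, while `‖(I+S) x‖ ≥ (1 - ‖S‖) ‖x‖` keeps the
denominator above `(1 - ‖S‖)²`. The ratio is the cosine of an angle, hence unchanged when the
increments are normalized. -/

open InnerProductGeometry
open scoped RealInnerProductSpace ENNReal

lemma angle_map_normalize {E F : Type*} [NormedAddCommGroup E] [NormedSpace ℝ E]
    [NormedAddCommGroup F] [InnerProductSpace ℝ F] (T : E →L[ℝ] F) (x y : E) :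
    angle (T (NormedSpace.normalize x)) (T (NormedSpace.normalize y)) = angle (T x) (T y) := by
  simp only [NormedSpace.normalize, map_smul]
  rcases eq_or_ne x 0 with rfl | hx
  · simp
  rcases eq_or_ne y 0 with rfl | hy
  · simp
  rw [angle_smul_left_of_pos _ _ (inv_pos.2 (norm_pos_iff.2 hx)),
    angle_smul_right_of_pos _ _ (inv_pos.2 (norm_pos_iff.2 hy))]

lemma ContinuousLinearMap.one_sub_opNorm_mul_le_norm_add_apply {E : Type*}
    [SeminormedAddCommGroup E] [NormedSpace ℝ E] (S : E →L[ℝ] E) (x : E) :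
    (1 - ‖S‖) * ‖x‖ ≤ ‖x + S x‖ := by
  have h₁ := norm_sub_norm_le x (-S x)
  have h₂ := S.le_opNorm x
  rw [sub_neg_eq_add, norm_neg] at h₁
  linarith

section WeaklyNull

variable {H : Type*} [NormedAddCommGroup H] [InnerProductSpace ℝ H]

theorem tendsto_inner_of_weakly_null_of_mem_compact {K : Set H} (hK : IsCompact K)
    {u w : ℕ → H} {C : ℝ} (hu : ∀ n, ‖u n‖ ≤ C) (hw : ∀ n, w n ∈ K)
    (hweak : ∀ f, Tendsto (fun n => ⟪u n, f⟫) atTop (𝓝 0)) :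
    Tendsto (fun n => ⟪u n, w n⟫) atTop (𝓝 0) := by
  refine tendsto_of_subseq_tendsto fun ns hns => ?_
  obtain ⟨y, -, φ, hφ, hwy⟩ := hK.tendsto_subseq fun k => hw (ns k)
  have hdist : Tendsto (fun k => C * ‖w (ns (φ k)) - y‖) atTop (𝓝 0) := by
    simpa using ((tendsto_sub_nhds_zero_iff.2 hwy).norm.const_mul C)
  have hdiff : Tendsto (fun k => ⟪u (ns (φ k)), w (ns (φ k)) - y⟫) atTop (𝓝 0) :=
    squeeze_zero_norm (fun k => (norm_inner_le_norm _ _).trans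
      (mul_le_mul_of_nonneg_right (hu _) (norm_nonneg _))) hdist
  refine ⟨φ, ?_⟩
  simpa [inner_sub_right] using ((hweak y).comp (hns.comp hφ.tendsto_atTop)).add hdiff

theorem IsCompactOperator.tendsto_norm_apply_of_weakly_null [CompleteSpace H]
    {F : Type*} [NormedAddCommGroup F] [InnerProductSpace ℝ F] [CompleteSpace F]
    {S : H →L[ℝ] F} (hS : IsCompactOperator S) {u : ℕ → H} {C : ℝ} (hu : ∀ n, ‖u n‖ ≤ C)
    (hweak : ∀ f, Tendsto (fun n => ⟪u n, f⟫) atTop (𝓝 0)) :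
    Tendsto (fun n => ‖S (u n)‖) atTop (𝓝 0) := by
  obtain ⟨K, hK, hSK⟩ := hS.image_closedBall_subset_compact C
  have hSu : ∀ f, Tendsto (fun n => ⟪S (u n), f⟫) atTop (𝓝 0) := fun f => by
    simpa only [ContinuousLinearMap.adjoint_inner_right] using
      hweak (ContinuousLinearMap.adjoint S f)
  have hsq : Tendsto (fun n => ⟪S (u n), S (u n)⟫) atTop (𝓝 0) :=
    tendsto_inner_of_weakly_null_of_mem_compact hK (fun n => S.le_opNorm_of_le (hu n))
      (fun n => hSK ⟨u n, by simpa using hu n, rfl⟩) hSu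
  simpa [real_inner_self_eq_norm_sq] using hsq.sqrt

end WeaklyNull

theorem tendsto_inner_div_norm_mul_norm_add_apply_of_weakly_null
    {H : Type*} [NormedAddCommGroup H] [InnerProductSpace ℝ H] [CompleteSpace H]
    {S : H →L[ℝ] H} (hS : IsCompactOperator S) (hS1 : ‖S‖ < 1) {u v : ℕ → H}
    (hu : ∀ n, ‖u n‖ = 1) (hv : ∀ n, ‖v n‖ = 1) (huv : ∀ n, ⟪u n, v n⟫ = 0)
    (hweak : ∀ f, Tendsto (fun n => ⟪u n, f⟫) atTop (𝓝 0)) :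
    Tendsto (fun n => ⟪u n + S (u n), v n + S (v n)⟫ /
      (‖u n + S (u n)‖ * ‖v n + S (v n)‖)) atTop (𝓝 0) := by
  obtain ⟨K, hK, hSK⟩ := hS.image_closedBall_subset_compact 1
  have hSu := hS.tendsto_norm_apply_of_weakly_null (fun n => (hu n).le) hweak
  have hcross : Tendsto (fun n => ⟪u n, S (v n)⟫) atTop (𝓝 0) :=
    tendsto_inner_of_weakly_null_of_mem_compact hK (fun n => (hu n).le)
      (fun n => hSK ⟨v n, by simp [hv n], rfl⟩) hweak
  have hrest : Tendsto (fun n => ⟪S (u n), v n + S (v n)⟫) atTop (𝓝 0) := by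
    refine squeeze_zero_norm (fun n => (norm_inner_le_norm _ _).trans ?_)
      (by simpa using hSu.mul_const (1 + ‖S‖))
    gcongr
    exact (norm_add_le _ _).trans (by simpa [hv n] using S.le_opNorm (v n))
  have hnum : Tendsto (fun n => ⟪u n + S (u n), v n + S (v n)⟫) atTop (𝓝 0) := by
    have h := hcross.add hrest
    rw [add_zero] at h
    refine h.congr fun n => ?_
    simp only [inner_add_left, inner_add_right, huv]
    ring
  set c := 1 - ‖S‖
  have hc : 0 < c := sub_pos.2 hS1
  have hden : ∀ n, c * c ≤ ‖u n + S (u n)‖ * ‖v n + S (v n)‖ := fun n => by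
    have hu' := S.one_sub_opNorm_mul_le_norm_add_apply (u n)
    have hv' := S.one_sub_opNorm_mul_le_norm_add_apply (v n)
    rw [hu n, mul_one] at hu'
    rw [hv n, mul_one] at hv'
    exact mul_le_mul hu' hv' hc.le (norm_nonneg _)
  refine squeeze_zero_norm (fun n => ?_) (by simpa using hnum.norm.div_const (c * c))
  rw [norm_div, Real.norm_of_nonneg ((mul_pos hc hc).trans_le (hden n)).le]
  exact div_le_div_of_nonneg_left (norm_nonneg _) (mul_pos hc hc) (hden n)

section IndicatorL2

variable {α : Type*} [MeasurableSpace α] {μ : Measure α}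

lemma abs_inner_indicatorConstLp_one_le {s : Set α} (hs : MeasurableSet s) (hμs : μ s ≠ ∞)
    (f : Lp ℝ 2 μ) :
    |⟪indicatorConstLp 2 hs hμs (1 : ℝ), f⟫| ≤
      ‖indicatorConstLp 2 hs hμs (1 : ℝ)‖ * (eLpNorm (s.indicator f) 2 μ).toReal := by
  have hfs : MemLp (s.indicator f) 2 μ := (Lp.memLp f).indicator hs
  have hinner : ⟪indicatorConstLp 2 hs hμs (1 : ℝ), f⟫ =
      ⟪indicatorConstLp 2 hs hμs (1 : ℝ), hfs.toLp _⟫ := by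
    rw [L2.inner_indicatorConstLp_one, L2.inner_indicatorConstLp_one,
      setIntegral_congr_ae hs (hfs.coeFn_toLp.mono fun x hx _ => hx),
      setIntegral_indicator hs, inter_self]
  rw [hinner, ← Lp.norm_toLp _ hfs]
  exact abs_real_inner_le_norm _ _

lemma tendsto_eLpNorm_indicator_of_tendsto_measure {p : ℝ≥0∞} (hp : 1 ≤ p) (hp_top : p ≠ ∞)
    {f : α → ℝ} (hf : MemLp f p μ) {E : ℕ → Set α} (hE : ∀ n, MeasurableSet (E n))
    (h0 : Tendsto (fun n => μ (E n)) atTop (𝓝 0)) :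
    Tendsto (fun n => eLpNorm ((E n).indicator f) p μ) atTop (𝓝 0) := by
  refine ENNReal.tendsto_nhds_zero.2 fun ε hε => ?_
  rcases eq_or_ne ε ∞ with rfl | hε_top
  · exact Eventually.of_forall fun _ => le_top
  obtain ⟨δ, hδ, hsmall⟩ :=
    hf.eLpNorm_indicator_le hp hp_top (ENNReal.toReal_pos hε.ne' hε_top)
  filter_upwards [h0.eventually (ge_mem_nhds (ENNReal.ofReal_pos.2 hδ))] with n hn
  exact (hsmall _ (hE n) hn).trans ENNReal.ofReal_toReal_le

theorem tendsto_inner_normalize_indicatorConstLp {E : ℕ → Set α}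
    (hE : ∀ n, MeasurableSet (E n)) (hμE : ∀ n, μ (E n) ≠ ∞)
    (h0 : Tendsto (fun n => μ (E n)) atTop (𝓝 0)) (f : Lp ℝ 2 μ) :
    Tendsto (fun n =>
      ⟪NormedSpace.normalize (indicatorConstLp 2 (hE n) (hμE n) (1 : ℝ)), f⟫) atTop (𝓝 0) := by
  have hf := (ENNReal.tendsto_toReal ENNReal.zero_ne_top).comp
    (tendsto_eLpNorm_indicator_of_tendsto_measure one_le_two ENNReal.ofNat_ne_top
      (Lp.memLp f) hE h0)
  refine squeeze_zero_norm (fun n => ?_) hf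
  set x := indicatorConstLp 2 (hE n) (hμE n) (1 : ℝ)
  rw [NormedSpace.normalize, real_inner_smul_left, norm_mul, norm_inv, norm_norm,
    Real.norm_eq_abs]
  calc ‖x‖⁻¹ * |⟪x, f⟫| ≤ ‖x‖⁻¹ * (‖x‖ * (eLpNorm ((E n).indicator f) 2 μ).toReal) := by
        gcongr
        exact abs_inner_indicatorConstLp_one_le (hE n) (hμE n) f
    _ ≤ (eLpNorm ((E n).indicator f) 2 μ).toReal := by
        rw [← mul_assoc]
        exact mul_le_of_le_one_left ENNReal.toReal_nonneg
          (inv_mul_le_one_of_le₀ le_rfl (norm_nonneg x))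

end IndicatorL2

lemma μ01_Ioc {a b : ℝ} (ha : 0 ≤ a) (hb : b ≤ 1) : μ01 (Ioc a b) = ENNReal.ofReal (b - a) := by
  rw [μ01, Measure.restrict_apply measurableSet_Ioc,
    inter_eq_left.2 (Ioc_subset_Icc_self.trans (Icc_subset_Icc ha hb)), Real.volume_Ioc]

lemma μ01_Ioc_ne_top (a b : ℝ) : μ01 (Ioc a b) ≠ ∞ :=
  ((Measure.restrict_apply_le _ _).trans_lt measure_Ioc_lt_top).ne

lemma incr_ne_zero {a b : ℝ} (ha : 0 ≤ a) (hab : a < b) (hb : b ≤ 1) : incr a b ≠ 0 := by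
  rw [← norm_pos_iff]
  change 0 < ‖indicatorConstLp 2 measurableSet_Ioc (μ01_Ioc_ne_top a b) (1 : ℝ)‖
  rw [norm_indicatorConstLp two_ne_zero ENNReal.ofNat_ne_top,
    measureReal_def, μ01_Ioc ha hb, ENNReal.toReal_ofReal (sub_nonneg.2 hab.le), norm_one,
    one_mul]
  exact Real.rpow_pos_of_pos (sub_pos.2 hab) _

lemma inner_incr_incr_eq_zero {a b c d : ℝ} (h : b ≤ c ∨ d ≤ a) : ⟪incr a b, incr c d⟫ = 0 := by
  have hdisj : Disjoint (Ioc a b) (Ioc c d) :=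
    h.elim Ioc_disjoint_Ioc_of_le fun h => (Ioc_disjoint_Ioc_of_le h).symm
  refine (L2.real_inner_indicatorConstLp_one_indicatorConstLp_one measurableSet_Ioc
    measurableSet_Ioc (μ01_Ioc_ne_top a b) (μ01_Ioc_ne_top c d)).trans ?_
  rw [hdisj.inter_eq, measureReal_empty]

theorem normalized_correlation_tendsto_zero
    (S : Lp ℝ 2 μ01 →L[ℝ] Lp ℝ 2 μ01)
    (hScomp : IsCompactOperator S) (hSnorm : ‖S‖ < 1)
    (a b c d : ℕ → ℝ)
    (hab : ∀ n, 0 ≤ a n ∧ a n < b n ∧ b n ≤ 1)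
    (hcd : ∀ n, 0 ≤ c n ∧ c n < d n ∧ d n ≤ 1)
    (hdisj : ∀ n, b n ≤ c n ∨ d n ≤ a n)
    (hshrink : Tendsto (fun n => b n - a n) atTop (𝓝 0)) :
    Tendsto (fun n =>
      (inner ℝ (incr (a n) (b n) + S (incr (a n) (b n)))
             (incr (c n) (d n) + S (incr (c n) (d n))) : ℝ) /
        (‖incr (a n) (b n) + S (incr (a n) (b n))‖ *
         ‖incr (c n) (d n) + S (incr (c n) (d n))‖)) atTop (𝓝 0) := by
  have hμ : Tendsto (fun n => μ01 (Ioc (a n) (b n))) atTop (𝓝 0) := by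
    simpa [fun n => μ01_Ioc (hab n).1 (hab n).2.2] using ENNReal.tendsto_ofReal hshrink
  have hweak := tendsto_inner_normalize_indicatorConstLp (fun n => measurableSet_Ioc)
    (fun n => μ01_Ioc_ne_top (a n) (b n)) hμ
  have key := tendsto_inner_div_norm_mul_norm_add_apply_of_weakly_null hScomp hSnorm
    (u := fun n => NormedSpace.normalize (incr (a n) (b n)))
    (v := fun n => NormedSpace.normalize (incr (c n) (d n)))
    (fun n => NormedSpace.norm_normalize (incr_ne_zero (hab n).1 (hab n).2.1 (hab n).2.2))
    (fun n => NormedSpace.norm_normalize (incr_ne_zero (hcd n).1 (hcd n).2.1 (hcd n).2.2))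
    (fun n => by simp [NormedSpace.normalize, real_inner_smul_left, real_inner_smul_right,
      inner_incr_incr_eq_zero (hdisj n)]) hweak
  refine key.congr fun n => ?_
  have h := congrArg Real.cos (angle_map_normalize (1 + S) (incr (a n) (b n)) (incr (c n) (d n)))
  rw [cos_angle, cos_angle] at h
  exact h
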